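/- Let L be an e-cyclic residuated lattice satisfying the left prelinearity law. If the collection of all convex subalgebras of L is totally ordered by set-inclusion, then the lattice order ≤ of L is a total order. -/

import Mathlib

universe u

/-- A residuated lattice: a lattice-ordered monoid with left and right residuals.
`ldiv x z` is `x \ z` and `rdiv z y` is `z / y`. -/
class ResiduatedLattice (α : Type u) extends Lattice α, Monoid α where
  ldiv : α → α → α
  rdiv : α → α → α
  mul_le_iff_le_ldiv : ∀ x y z : α, x * y ≤ z ↔ y ≤ ldiv x z
  mul_le_iff_le_rdiv : ∀ x y z : α, x * y ≤ z ↔ x ≤ rdiv z y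

namespace ResiduatedLattice

variable {α : Type u} [ResiduatedLattice α]

/-- `L` is e-cyclic if `x \ e = e / x` for all `x`. -/
def ECyclic (α : Type u) [ResiduatedLattice α] : Prop :=
  ∀ x : α, ldiv x 1 = rdiv 1 x

/-- Absolute value: `|x| = x ⊓ (e / x) ⊓ e`. -/
def absv (x : α) : α := x ⊓ rdiv 1 x ⊓ 1

/-- A convex subalgebra: contains `e`, closed under all the operations, and order-convex. -/
structure IsConvexSubalgebra (H : Set α) : Prop where
  one_mem : (1 : α) ∈ H
  mul_mem : ∀ ⦃x⦄, x ∈ H → ∀ ⦃y⦄, y ∈ H → x * y ∈ H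
  sup_mem : ∀ ⦃x⦄, x ∈ H → ∀ ⦃y⦄, y ∈ H → x ⊔ y ∈ H
  inf_mem : ∀ ⦃x⦄, x ∈ H → ∀ ⦃y⦄, y ∈ H → x ⊓ y ∈ H
  ldiv_mem : ∀ ⦃x⦄, x ∈ H → ∀ ⦃y⦄, y ∈ H → ldiv x y ∈ H
  rdiv_mem : ∀ ⦃x⦄, x ∈ H → ∀ ⦃y⦄, y ∈ H → rdiv x y ∈ H
  convex : ∀ ⦃a⦄, a ∈ H → ∀ ⦃b⦄, b ∈ H → ∀ ⦃x⦄, a ≤ x → x ≤ b → x ∈ H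

/-- `C[S]`: the smallest convex subalgebra containing `S`. -/
def convexClosure (S : Set α) : Set α :=
  ⋂₀ {H : Set α | IsConvexSubalgebra H ∧ S ⊆ H}

end ResiduatedLattice

/-!
Put `u = (a\b) ∧ e` and `v = (b\a) ∧ e`; prelinearity says `u ∨ v = e`, and then also
`u ∨ vⁿ = e` for every `n`. For a negative element `v`, the elements `z` with
`vⁿ ≤ z ≤ vⁿ\e` for some `n` form a convex subalgebra (e-cyclicity makes the defining
condition symmetric in left and right, which is what closure under both residuals needs).
The subalgebras attached to `u` and `v` are comparable; if, say, `u` lies in the one attached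
to `v`, then `vⁿ ≤ u` for some `n`, so `e = u ∨ vⁿ ≤ u`, i.e. `e ≤ a\b`, i.e. `a ≤ b`.
-/

namespace ResiduatedLattice

variable {α : Type u} [ResiduatedLattice α]

theorem gc_mul_ldiv (x : α) : GaloisConnection (x * ·) (ldiv x) :=
  mul_le_iff_le_ldiv x

theorem gc_mul_rdiv (y : α) : GaloisConnection (· * y) (rdiv · y) :=
  fun x z => mul_le_iff_le_rdiv x y z

instance : MulLeftMono α := ⟨fun x _ _ h => (gc_mul_ldiv x).monotone_l h⟩

instance : MulRightMono α := ⟨fun y _ _ h => (gc_mul_rdiv y).monotone_l h⟩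

theorem mul_sup (x y z : α) : x * (y ⊔ z) = x * y ⊔ x * z := (gc_mul_ldiv x).l_sup

theorem mul_ldiv_le (x z : α) : x * ldiv x z ≤ z := (gc_mul_ldiv x).l_u_le z

theorem rdiv_mul_le (z y : α) : rdiv z y * y ≤ z := (gc_mul_rdiv y).l_u_le z

theorem le_of_one_le_ldiv {a b : α} (h : 1 ≤ ldiv a b) : a ≤ b := by
  simpa using (mul_le_iff_le_ldiv a 1 b).2 h

theorem ECyclic.mul_le_one_symm (hec : ECyclic α) {x y : α} (h : x * y ≤ 1) : y * x ≤ 1 :=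
  (mul_le_iff_le_rdiv y x 1).2 (hec x ▸ (mul_le_iff_le_ldiv x y 1).1 h)

theorem one_le_sup_pow {u v : α} (hv : v ≤ 1) (huv : 1 ≤ u ⊔ v) : ∀ n : ℕ, 1 ≤ u ⊔ v ^ n
  | 0 => by simp
  | n + 1 => calc
      (1 : α) ≤ u ⊔ v := huv
      _ ≤ u ⊔ v * (u ⊔ v ^ n) :=
          sup_le_sup_left (le_mul_of_one_le_right' (one_le_sup_pow hv huv n)) u
      _ = u ⊔ (v * u ⊔ v ^ (n + 1)) := by rw [mul_sup, pow_succ']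
      _ ≤ u ⊔ v ^ (n + 1) :=
          sup_le le_sup_left (sup_le_sup_right (mul_le_of_le_one_left' hv) _)

theorem one_le_of_pow_le {u v : α} (hv : v ≤ 1) (huv : 1 ≤ u ⊔ v) {n : ℕ} (hn : v ^ n ≤ u) :
    1 ≤ u :=
  (one_le_sup_pow hv huv n).trans (sup_le le_rfl hn)

/-- `z` lies in the interval `[c, c\e]`. -/
def BoundedBy (c z : α) : Prop := c ≤ z ∧ c * z ≤ 1

namespace BoundedBy

variable {c d x z w : α}

theorem mono (h : BoundedBy c z) (hdc : d ≤ c) : BoundedBy d z :=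
  ⟨hdc.trans h.1, (mul_le_mul_left hdc z).trans h.2⟩

theorem mul (hz : BoundedBy c z) (hw : BoundedBy c w) : BoundedBy (c * c) (z * w) := by
  refine ⟨mul_le_mul' hz.1 hw.1, ?_⟩
  calc c * c * (z * w) = c * ((c * z) * w) := by simp only [mul_assoc]
    _ ≤ c * (1 * w) := mul_le_mul_right (mul_le_mul_left hz.2 w) c
    _ ≤ 1 := by rw [one_mul]; exact hw.2

theorem sup (hz : BoundedBy c z) (hw : BoundedBy c w) : BoundedBy c (z ⊔ w) :=
  ⟨hz.1.trans le_sup_left, (mul_sup c z w).trans_le (sup_le hz.2 hw.2)⟩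

theorem inf (hz : BoundedBy c z) (hw : BoundedBy c w) : BoundedBy c (z ⊓ w) :=
  ⟨le_inf hz.1 hw.1, (mul_le_mul_right inf_le_left c).trans hz.2⟩

theorem ldiv (hec : ECyclic α) (hz : BoundedBy c z) (hw : BoundedBy c w) :
    BoundedBy (c * c) (ldiv z w) := by
  refine ⟨(mul_le_iff_le_ldiv z _ w).1 ?_, ?_⟩
  · calc z * (c * c) = (z * c) * c := (mul_assoc ..).symm
      _ ≤ 1 * c := mul_le_mul_left (hec.mul_le_one_symm hz.2) c
      _ ≤ w := by rw [one_mul]; exact hw.1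
  · calc c * c * ResiduatedLattice.ldiv z w ≤ c * (z * ResiduatedLattice.ldiv z w) := by
          rw [← mul_assoc]; exact mul_le_mul_left (mul_le_mul_right hz.1 c) _
      _ ≤ c * w := mul_le_mul_right (mul_ldiv_le z w) c
      _ ≤ 1 := hw.2

theorem rdiv (hec : ECyclic α) (hz : BoundedBy c z) (hw : BoundedBy c w) :
    BoundedBy (c * c) (rdiv z w) := by
  refine ⟨(mul_le_iff_le_rdiv _ w z).1 ?_, hec.mul_le_one_symm ?_⟩
  · calc c * c * w = c * (c * w) := mul_assoc ..
      _ ≤ c * 1 := mul_le_mul_right hw.2 c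
      _ ≤ z := by rw [mul_one]; exact hz.1
  · calc ResiduatedLattice.rdiv z w * (c * c) ≤ ResiduatedLattice.rdiv z w * w * c := by
          rw [mul_assoc]; exact mul_le_mul_right (mul_le_mul_left hw.1 c) _
      _ ≤ z * c := mul_le_mul_left (rdiv_mul_le z w) c
      _ ≤ 1 := hec.mul_le_one_symm hz.2

theorem of_le_of_le (ha : BoundedBy c z) (hb : BoundedBy c w) (hzx : z ≤ x) (hxw : x ≤ w) :
    BoundedBy c x :=
  ⟨ha.1.trans hzx, (mul_le_mul_right hxw c).trans hb.2⟩

end BoundedBy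

def boundedByPow (v : α) : Set α := {z | ∃ n : ℕ, BoundedBy (v ^ n) z}

section boundedByPow

variable {v z w : α}

theorem self_mem_boundedByPow (hv : v ≤ 1) : v ∈ boundedByPow v :=
  ⟨1, by rw [pow_one]; exact ⟨le_rfl, mul_le_one' hv hv⟩⟩

theorem exists_boundedBy_pow_of_mem (hv : v ≤ 1) (hz : z ∈ boundedByPow v)
    (hw : w ∈ boundedByPow v) : ∃ k, BoundedBy (v ^ k) z ∧ BoundedBy (v ^ k) w := by
  obtain ⟨n, hn⟩ := hz
  obtain ⟨m, hm⟩ := hw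
  exact ⟨max n m, hn.mono (pow_le_pow_right_of_le_one' hv (le_max_left n m)),
    hm.mono (pow_le_pow_right_of_le_one' hv (le_max_right n m))⟩

theorem isConvexSubalgebra_boundedByPow (hec : ECyclic α) (hv : v ≤ 1) :
    IsConvexSubalgebra (boundedByPow v) where
  one_mem := ⟨0, by simp [BoundedBy]⟩
  mul_mem _ hz _ hw := by
    obtain ⟨k, hzk, hwk⟩ := exists_boundedBy_pow_of_mem hv hz hw
    exact ⟨k + k, pow_add v k k ▸ hzk.mul hwk⟩
  sup_mem _ hz _ hw := by
    obtain ⟨k, hzk, hwk⟩ := exists_boundedBy_pow_of_mem hv hz hw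
    exact ⟨k, hzk.sup hwk⟩
  inf_mem _ hz _ hw := by
    obtain ⟨k, hzk, hwk⟩ := exists_boundedBy_pow_of_mem hv hz hw
    exact ⟨k, hzk.inf hwk⟩
  ldiv_mem _ hz _ hw := by
    obtain ⟨k, hzk, hwk⟩ := exists_boundedBy_pow_of_mem hv hz hw
    exact ⟨k + k, pow_add v k k ▸ hzk.ldiv hec hwk⟩
  rdiv_mem _ hz _ hw := by
    obtain ⟨k, hzk, hwk⟩ := exists_boundedBy_pow_of_mem hv hz hw
    exact ⟨k + k, pow_add v k k ▸ hzk.rdiv hec hwk⟩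
  convex _ ha _ hb _ hax hxb := by
    obtain ⟨k, hak, hbk⟩ := exists_boundedBy_pow_of_mem hv ha hb
    exact ⟨k, hak.of_le_of_le hbk hax hxb⟩

end boundedByPow

theorem le_of_boundedByPow_subset {a b : α} (hab : (ldiv a b ⊓ 1) ⊔ (ldiv b a ⊓ 1) = 1)
    (h : boundedByPow (ldiv a b ⊓ 1) ⊆ boundedByPow (ldiv b a ⊓ 1)) : a ≤ b := by
  obtain ⟨n, hn, -⟩ := h (self_mem_boundedByPow inf_le_right)
  exact le_of_one_le_ldiv ((one_le_of_pow_le inf_le_right hab.ge hn).trans inf_le_left)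

end ResiduatedLattice

open ResiduatedLattice

/-- if the convex subalgebras of an e-cyclic residuated lattice with
left prelinearity form a chain, then the lattice order is total. -/
theorem stmt9 {α : Type u} [ResiduatedLattice α] (hec : ECyclic α)
    (hpre : ∀ x y : α, (ldiv x y ⊓ 1) ⊔ (ldiv y x ⊓ 1) = 1)
    (hchain : IsChain (· ⊆ ·) {H : Set α | IsConvexSubalgebra H}) :
    ∀ a b : α, a ≤ b ∨ b ≤ a := by
  intro a b
  have hcs : ∀ x y : α, IsConvexSubalgebra (boundedByPow (ldiv x y ⊓ 1)) :=
    fun x y => isConvexSubalgebra_boundedByPow hec inf_le_right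
  rcases hchain.total (hcs a b) (hcs b a) with h | h
  · exact Or.inl (le_of_boundedByPow_subset (hpre a b) h)
  · exact Or.inr (le_of_boundedByPow_subset (hpre b a) h)
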